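/- Let X and Y be complex Banach spaces, and suppose Y has property (β). If the set of norm-attaining elements of A_u(X) (scalar-valued) is dense in A_u(X) with respect to the supremum norm, then the set of norm-attaining elements of A_u(X;Y) is dense in A_u(X;Y) with respect to the supremum norm. -/

import Mathlib

open Metric Filter

noncomputable def supOnBall {X W : Type*} [NormedAddCommGroup X] [NormedAddCommGroup W]
    (s : ℝ) (f : X → W) : ℝ :=
  sSup ((fun x => ‖f x‖) '' Metric.closedBall (0 : X) s)

def IsHomogPoly (𝕜 : Type*) [NontriviallyNormedField 𝕜] {X Y : Type*}
    [NormedAddCommGroup X] [NormedSpace 𝕜 X] [NormedAddCommGroup Y] [NormedSpace 𝕜 Y]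
    (N : ℕ) (P : X → Y) : Prop :=
  ∃ M : ContinuousMultilinearMap 𝕜 (fun _ : Fin N => X) Y, ∀ x, P x = M (fun _ => x)

def IsPolyDegLE (𝕜 : Type*) [NontriviallyNormedField 𝕜] {X Y : Type*}
    [NormedAddCommGroup X] [NormedSpace 𝕜 X] [NormedAddCommGroup Y] [NormedSpace 𝕜 Y]
    (k : ℕ) (P : X → Y) : Prop :=
  ∃ Pc : ℕ → X → Y, (∀ j, j ≤ k → IsHomogPoly 𝕜 j (Pc j)) ∧
    ∀ x, P x = ∑ j ∈ Finset.range (k + 1), Pc j x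

def MemAu {X W : Type*} [NormedAddCommGroup X] [NormedSpace ℂ X]
    [NormedAddCommGroup W] [NormedSpace ℂ W] (f : X → W) : Prop :=
  DifferentiableOn ℂ f (Metric.ball (0 : X) 1) ∧
    UniformContinuousOn f (Metric.closedBall (0 : X) 1)

universe u v

def HasPropertyBeta (𝕜 : Type u) [RCLike 𝕜] (Y : Type v)
    [NormedAddCommGroup Y] [NormedSpace 𝕜 Y] : Prop :=
  ∃ (Λ : Type v) (y : Λ → Y) (g : Λ → (Y →L[𝕜] 𝕜)) (lam : ℝ),
    0 ≤ lam ∧ lam < 1 ∧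
    (∀ α, ‖y α‖ = 1 ∧ ‖g α‖ = 1 ∧ g α (y α) = 1) ∧
    (∀ α β, α ≠ β → ‖g α (y β)‖ ≤ lam) ∧
    (∀ z : Y, ‖z‖ = ⨆ α, ‖g α z‖)

section Helpers

variable {X W V : Type*} [NormedAddCommGroup X] [NormedSpace ℂ X]
  [NormedAddCommGroup W] [NormedSpace ℂ W] [NormedAddCommGroup V] [NormedSpace ℂ V]

lemma cb_ne : (Metric.closedBall (0 : X) 1).Nonempty :=
  ⟨0, Metric.mem_closedBall_self zero_le_one⟩

lemma ucOn_add {f g : X → W} {s : Set X} (hf : UniformContinuousOn f s)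
    (hg : UniformContinuousOn g s) : UniformContinuousOn (fun x => f x + g x) s := by
  rw [uniformContinuousOn_iff_restrict] at hf hg ⊢
  exact hf.add hg

lemma ucOn_comp {f : X → W} {s : Set X} (hf : UniformContinuousOn f s)
    (L : W →L[ℂ] V) : UniformContinuousOn (fun x => L (f x)) s := by
  rw [uniformContinuousOn_iff_restrict] at hf ⊢
  exact L.uniformContinuous.comp hf

lemma MemAu.addAu {f g : X → W} (hf : MemAu f) (hg : MemAu g) :
    MemAu (fun x => f x + g x) :=
  ⟨hf.1.add hg.1, ucOn_add hf.2 hg.2⟩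

lemma MemAu.compAu {f : X → W} (hf : MemAu f) (L : W →L[ℂ] V) :
    MemAu (fun x => L (f x)) :=
  ⟨L.differentiable.comp_differentiableOn hf.1, ucOn_comp hf.2 L⟩

lemma MemAu.subAu {f g : X → W} (hf : MemAu f) (hg : MemAu g) :
    MemAu (fun x => f x - g x) := by
  have := hf.addAu (hg.compAu (-(ContinuousLinearMap.id ℂ W)))
  simpa [sub_eq_add_neg] using this

/-- a uniformly continuous function on the closed unit ball is bounded there -/
lemma bdd_of_ucOn {f : X → W} (hf : UniformContinuousOn f (Metric.closedBall (0 : X) 1)) :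
    BddAbove ((fun x => ‖f x‖) '' Metric.closedBall (0 : X) 1) := by
  rw [Metric.uniformContinuousOn_iff] at hf
  obtain ⟨δ, hδ, hδ'⟩ := hf 1 one_pos
  obtain ⟨n, hn⟩ := exists_nat_gt (1 / δ)
  set m : ℕ := n + 1 with hm
  have hmpos : (0:ℝ) < m := by positivity
  have hmδ : 1 / (m:ℝ) < δ := by
    rw [div_lt_iff₀ hmpos]
    have h1 : 1 / δ < (m:ℝ) := by
      have : (n:ℝ) ≤ m := by exact_mod_cast Nat.le_succ n
      linarith
    calc (1:ℝ) = δ * (1/δ) := by field_simp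
    _ < δ * m := by exact mul_lt_mul_of_pos_left h1 hδ
  refine ⟨‖f 0‖ + m, ?_⟩
  rintro r ⟨x, hx, rfl⟩
  rw [Metric.mem_closedBall, dist_zero_right] at hx
  have key : ∀ i : ℕ, i ≤ m → ‖f (((i:ℝ) / m) • x)‖ ≤ ‖f 0‖ + i := by
    intro i
    induction i with
    | zero => intro _; simp
    | succ k ih =>
      intro hk
      have hk' : k ≤ m := Nat.le_of_succ_le hk
      have mem : ∀ j : ℕ, j ≤ m → ((j:ℝ) / m) • x ∈ Metric.closedBall (0:X) 1 := by
        intro j hj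
        rw [Metric.mem_closedBall, dist_zero_right, norm_smul, Real.norm_eq_abs,
          abs_of_nonneg (by positivity)]
        have h1 : (j:ℝ) / m ≤ 1 := by
          rw [div_le_one hmpos]; exact_mod_cast hj
        nlinarith [norm_nonneg x]
      have hdist : dist (((((k:ℕ)+1:ℕ):ℝ) / m) • x) (((k:ℝ) / m) • x) < δ := by
        rw [dist_eq_norm, ← sub_smul, norm_smul, Real.norm_eq_abs]
        have : ((((k:ℕ)+1:ℕ):ℝ) / m - (k:ℝ) / m) = 1 / m := by
          push_cast; ring
        rw [this, abs_of_nonneg (by positivity)]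
        calc 1 / (m:ℝ) * ‖x‖ ≤ 1 / m * 1 := by
              apply mul_le_mul_of_nonneg_left hx (by positivity)
        _ = 1/m := by ring
        _ < δ := hmδ
      have hstep := hδ' _ (mem (k+1) hk) _ (mem k hk') hdist
      rw [dist_eq_norm] at hstep
      have h2 := norm_sub_norm_le (f (((((k:ℕ)+1:ℕ):ℝ) / m) • x)) (f (((k:ℝ) / m) • x))
      have h3 := ih hk'
      have hc : (((k:ℕ)+1:ℕ):ℝ) = (k:ℝ) + 1 := by push_cast; ring
      linarith [hstep, h2, h3, hc]
  have := key m le_rfl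
  rw [div_self (ne_of_gt hmpos), one_smul] at this
  exact this

lemma supOnBall_le {f : X → W} {C : ℝ}
    (h : ∀ x ∈ Metric.closedBall (0:X) 1, ‖f x‖ ≤ C) : supOnBall 1 f ≤ C := by
  apply csSup_le (cb_ne.image _)
  rintro r ⟨x, hx, rfl⟩
  exact h x hx

lemma le_supOnBall {f : X → W} (hb : BddAbove ((fun x => ‖f x‖) '' Metric.closedBall (0:X) 1))
    {x : X} (hx : x ∈ Metric.closedBall (0:X) 1) : ‖f x‖ ≤ supOnBall 1 f :=
  le_csSup hb ⟨x, hx, rfl⟩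

lemma supOnBall_nonneg {f : X → W}
    (hb : BddAbove ((fun x => ‖f x‖) '' Metric.closedBall (0:X) 1)) :
    0 ≤ supOnBall 1 f :=
  le_trans (norm_nonneg _) (le_supOnBall hb (Metric.mem_closedBall_self zero_le_one))

end Helpers

set_option maxHeartbeats 1000000 in
theorem stmt4 {X : Type*} {Y : Type v}
    [NormedAddCommGroup X] [NormedSpace ℂ X] [CompleteSpace X]
    [NormedAddCommGroup Y] [NormedSpace ℂ Y] [CompleteSpace Y]
    (hβ : HasPropertyBeta ℂ Y)
    (hdense : ∀ g : X → ℂ, MemAu g → ∀ ε : ℝ, 0 < ε →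
      ∃ f : X → ℂ, MemAu f ∧
        (∃ x₀ : X, ‖x₀‖ ≤ 1 ∧ ‖f x₀‖ = supOnBall 1 f) ∧
        supOnBall 1 (fun x => g x - f x) < ε) :
    ∀ G : X → Y, MemAu G → ∀ ε : ℝ, 0 < ε →
      ∃ F : X → Y, MemAu F ∧
        (∃ x₀ : X, ‖x₀‖ ≤ 1 ∧ ‖F x₀‖ = supOnBall 1 F) ∧
        supOnBall 1 (fun x => G x - F x) < ε := by
  intro G hG ε hε
  obtain ⟨Λ, y, g, lam, hlam0, hlam1, hunit, hsep, hnormY⟩ := hβ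
  have hGb := bdd_of_ucOn hG.2
  by_cases hSε : supOnBall 1 G < ε
  · -- take F = 0
    refine ⟨fun _ => 0, ⟨differentiableOn_const _, by rw [uniformContinuousOn_iff_restrict]; exact uniformContinuous_const⟩, ⟨0, by simp, ?_⟩, ?_⟩
    · have h0 : supOnBall 1 (fun _ : X => (0:Y)) = 0 := by
        unfold supOnBall
        rw [show (fun x : X => ‖(0:Y)‖) = fun _ : X => (0:ℝ) by simp]
        rw [(cb_ne (X := X)).image_const, csSup_singleton]
      simp [h0]
    · simpa using hSε
  · push_neg at hSε
    set S : ℝ := supOnBall 1 G with hSdef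
    have hS0 : 0 < S := lt_of_lt_of_le hε hSε
    set ρ : ℝ := ε / (4 * (S + 1)) with hρdef
    have hρ0 : 0 < ρ := by positivity
    have hρS : ρ * (S + 1) = ε / 4 := by
      rw [hρdef]; field_simp
    set η : ℝ := min (ε / (2 * (ρ + 1))) (S * ρ * (1 - lam) / (3 + 2 * ρ)) with hηdef
    have hη0 : 0 < η := by
      apply lt_min (by positivity)
      have : 0 < 1 - lam := by linarith
      positivity
    have hη1 : η ≤ ε / (2 * (ρ + 1)) := min_le_left _ _
    have hη2 : η ≤ S * ρ * (1 - lam) / (3 + 2 * ρ) := min_le_right _ _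
    -- find x₁ with S - η < ‖G x₁‖
    have hlt : S - η < sSup ((fun x => ‖G x‖) '' Metric.closedBall (0:X) 1) := by
      have : S - η < supOnBall 1 G := by rw [← hSdef]; linarith
      unfold supOnBall at this; exact this
    obtain ⟨r, hr, hrlt⟩ := exists_lt_of_lt_csSup (cb_ne.image _) hlt
    obtain ⟨x₁, hx₁, rfl⟩ := hr
    -- Λ is nonempty
    have hΛ : Nonempty Λ := by
      rcases isEmpty_or_nonempty Λ with hE | hN
      · exfalso
        have h0 : ‖G x₁‖ = 0 := by
          rw [hnormY (G x₁), Real.iSup_of_isEmpty]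
        have hηS : η < S := by
          have h3 : S * ρ * (1 - lam) / (3 + 2 * ρ) < S := by
            rw [div_lt_iff₀ (by positivity)]
            nlinarith
          exact lt_of_le_of_lt hη2 h3
        have hrlt' : S - η < ‖G x₁‖ := hrlt
        rw [h0] at hrlt'; linarith
      · exact hN
    have hrlt' : S - η < ‖G x₁‖ := hrlt
    obtain ⟨α, hα⟩ := exists_lt_of_lt_ciSup (by rw [← hnormY (G x₁)]; exact hrlt')
    -- the scalar function h
    set h : X → ℂ := fun x => g α (G x) with hhdef
    have hh : MemAu h := hG.compAu (g α)
    obtain ⟨f, hf, ⟨x₀, hx₀, hx₀f⟩, hfη⟩ := hdense h hh η hη0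
    set T : ℝ := supOnBall 1 f with hTdef
    set η' : ℝ := supOnBall 1 (fun x => h x - f x) with hη'def
    have hfb := bdd_of_ucOn hf.2
    have hhf : MemAu (fun x => h x - f x) := hh.subAu hf
    have hhfb := bdd_of_ucOn hhf.2
    have hη'0 : 0 ≤ η' := supOnBall_nonneg hhfb
    have hη'η : η' < η := hfη
    have hT0 : 0 ≤ T := supOnBall_nonneg hfb
    -- pointwise facts
    have hfle : ∀ x ∈ Metric.closedBall (0:X) 1, ‖f x‖ ≤ T :=
      fun x hx => le_supOnBall hfb hx
    have hhfle : ∀ x ∈ Metric.closedBall (0:X) 1, ‖h x - f x‖ ≤ η' :=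
      fun x hx => le_supOnBall hhfb hx
    have hGle : ∀ x ∈ Metric.closedBall (0:X) 1, ‖G x‖ ≤ S :=
      fun x hx => le_supOnBall hGb hx
    have hgnorm : ∀ β (z : Y), ‖g β z‖ ≤ ‖z‖ := by
      intro β z
      calc ‖g β z‖ ≤ ‖g β‖ * ‖z‖ := (g β).le_opNorm z
      _ = ‖z‖ := by rw [(hunit β).2.1, one_mul]
    have hx₁' : x₁ ∈ Metric.closedBall (0:X) 1 := hx₁
    have hx₀' : x₀ ∈ Metric.closedBall (0:X) 1 := by
      rw [Metric.mem_closedBall, dist_zero_right]; exact hx₀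
    -- T bounds
    have hTlb : S - 2 * η < T := by
      have h1 : ‖f x₁‖ ≤ T := hfle x₁ hx₁'
      have h2 : ‖h x₁ - f x₁‖ ≤ η' := hhfle x₁ hx₁'
      have h3 : ‖h x₁‖ - ‖f x₁‖ ≤ ‖h x₁ - f x₁‖ := norm_sub_norm_le _ _
      have h4 : S - η < ‖h x₁‖ := hα
      linarith
    have hTub : T ≤ S + η' := by
      have h1 : ‖h x₀ - f x₀‖ ≤ η' := hhfle x₀ hx₀'
      have h2 : ‖f x₀‖ - ‖h x₀‖ ≤ ‖f x₀ - h x₀‖ := norm_sub_norm_le _ _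
      rw [norm_sub_rev] at h2
      have h3 : ‖h x₀‖ ≤ ‖G x₀‖ := hgnorm α (G x₀)
      have h4 : ‖G x₀‖ ≤ S := hGle x₀ hx₀'
      rw [← hx₀f]
      linarith
    set c : ℝ := 1 + ρ with hcdef
    set F : X → Y := fun x => G x + (((c:ℂ)) * f x - h x) • y α with hFdef
    -- MemAu F
    have hcf : MemAu (fun x => (c:ℂ) * f x) := by
      have := hf.compAu ((c:ℂ) • ContinuousLinearMap.id ℂ ℂ)
      simpa [smul_eq_mul] using this
    have hinner : MemAu (fun x => (c:ℂ) * f x - h x) := hcf.subAu hh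
    have hsmul : MemAu (fun x => ((c:ℂ) * f x - h x) • y α) := by
      have := hinner.compAu ((ContinuousLinearMap.id ℂ ℂ).smulRight (y α))
      simpa using this
    have hFAu : MemAu F := hG.addAu hsmul
    -- g α (F x) = c * f x
    have hgF : ∀ x, g α (F x) = (c:ℂ) * f x := by
      intro x
      simp only [hFdef, map_add, map_smul, smul_eq_mul, hhdef]
      rw [(hunit α).2.2]
      ring
    -- pointwise error bound
    have herr : ∀ x ∈ Metric.closedBall (0:X) 1, ‖(c:ℂ) * f x - h x‖ ≤ ρ * T + η' := by
      intro x hx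
      have heq : (c:ℂ) * f x - h x = (ρ:ℂ) * f x + (f x - h x) := by
        rw [hcdef]; push_cast; ring
      rw [heq]
      calc ‖(ρ:ℂ) * f x + (f x - h x)‖ ≤ ‖(ρ:ℂ) * f x‖ + ‖f x - h x‖ := norm_add_le _ _
      _ = ρ * ‖f x‖ + ‖h x - f x‖ := by
          rw [norm_mul, Complex.norm_real, Real.norm_eq_abs, abs_of_pos hρ0, norm_sub_rev]
      _ ≤ ρ * T + η' := by
          have := hfle x hx
          have := hhfle x hx
          nlinarith
    -- key arithmetic inequality
    have hkey : S + lam * (ρ * T + η') ≤ c * T := by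
      have h1 : η * (3 + 2 * ρ) ≤ S * ρ * (1 - lam) := by
        rw [le_div_iff₀ (by positivity)] at hη2
        linarith [hη2]
      have h2 : lam * η' ≤ lam * η := mul_le_mul_of_nonneg_left (le_of_lt hη'η) hlam0
      have h3 : S - 2*η ≤ T := le_of_lt hTlb
      have h4 : 0 ≤ 1 - lam := by linarith
      rw [hcdef]
      nlinarith [mul_le_mul_of_nonneg_left h3 (mul_nonneg (le_of_lt hρ0) h4),
        mul_nonneg hlam0 hη'0, mul_nonneg (le_of_lt hη0) hlam0]
    -- upper bound on ‖F x‖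
    have hFub : ∀ x ∈ Metric.closedBall (0:X) 1, ‖F x‖ ≤ c * T := by
      intro x hx
      rw [hnormY (F x)]
      apply ciSup_le
      intro β
      by_cases hβα : β = α
      · subst hβα
        rw [hgF x, norm_mul, Complex.norm_real, Real.norm_eq_abs,
          abs_of_pos (by rw [hcdef]; linarith)]
        exact mul_le_mul_of_nonneg_left (hfle x hx) (by rw [hcdef]; linarith)
      · have heq : g β (F x) = g β (G x) + ((c:ℂ) * f x - h x) * g β (y α) := by
          simp only [hFdef, map_add, map_smul, smul_eq_mul]
        rw [heq]
        calc ‖g β (G x) + ((c:ℂ) * f x - h x) * g β (y α)‖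
            ≤ ‖g β (G x)‖ + ‖(c:ℂ) * f x - h x‖ * ‖g β (y α)‖ := by
              refine le_trans (norm_add_le _ _) ?_
              rw [norm_mul]
        _ ≤ S + (ρ * T + η') * lam := by
              have h1 : ‖g β (G x)‖ ≤ S := le_trans (hgnorm β (G x)) (hGle x hx)
              have h2 : ‖g β (y α)‖ ≤ lam := hsep β α hβα
              have h3 := herr x hx
              nlinarith [norm_nonneg ((c:ℂ) * f x - h x), norm_nonneg (g β (y α))]
        _ ≤ c * T := by nlinarith [hkey]
    -- ‖F x₀‖ = c * T
    have hgFx₀ : ‖g α (F x₀)‖ = c * T := by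
      rw [hgF x₀, norm_mul, Complex.norm_real, Real.norm_eq_abs,
        abs_of_pos (by rw [hcdef]; linarith), hx₀f]
    have hFx₀ : ‖F x₀‖ = c * T := by
      refine le_antisymm (hFub x₀ hx₀') ?_
      rw [← hgFx₀]
      exact hgnorm α (F x₀)
    have hFsup : supOnBall 1 F = c * T := by
      refine le_antisymm (supOnBall_le hFub) ?_
      rw [← hFx₀]
      exact le_supOnBall ⟨c * T, by rintro r ⟨x, hx, rfl⟩; exact hFub x hx⟩ hx₀'
    refine ⟨F, hFAu, ⟨x₀, hx₀, by rw [hFx₀, hFsup]⟩, ?_⟩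
    -- error estimate
    have herr2 : supOnBall 1 (fun x => G x - F x) ≤ ρ * T + η' := by
      apply supOnBall_le
      intro x hx
      have heq : G x - F x = -(((c:ℂ) * f x - h x) • y α) := by
        rw [hFdef]; exact sub_add_cancel_left _ _
      rw [heq, norm_neg, norm_smul, (hunit α).1, mul_one]
      exact herr x hx
    have hfin : ρ * T + η' < ε := by
      have h1 : ρ * T ≤ ρ * (S + η') := mul_le_mul_of_nonneg_left hTub (le_of_lt hρ0)
      have h2 : ρ * η' ≤ ρ * η := mul_le_mul_of_nonneg_left (le_of_lt hη'η) (le_of_lt hρ0)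
      have h3 : (ρ + 1) * η ≤ ε / 2 := by
        rw [hηdef]
        calc (ρ + 1) * min (ε / (2 * (ρ + 1))) (S * ρ * (1 - lam) / (3 + 2 * ρ))
            ≤ (ρ + 1) * (ε / (2 * (ρ + 1))) :=
              mul_le_mul_of_nonneg_left (min_le_left _ _) (by positivity)
        _ = ε / 2 := by field_simp
      have h4 : ρ * S ≤ ε / 4 := by nlinarith [hρS]
      nlinarith
    exact lt_of_le_of_lt herr2 hfin
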